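/- arXiv:1609.09662 — 2 statements merged into one kernel-verified Lean document; each statement's English description precedes it below -/
import Mathlib

section
/- A finite abelian group is filled if and only if it is cyclic of order 3, cyclic of order 5, or an elementary abelian 2-group. -/
open Pointwise

/-- `S` is product-free if `S ∩ SS = ∅`. -/
def ProductFree {G : Type*} [Group G] (S : Set G) : Prop :=
  Disjoint S (S * S)

/-- `S` is locally maximal product-free if it is product-free and not properly
contained in any product-free set. -/
def LocallyMaximalPF {G : Type*} [Group G] (S : Set G) : Prop :=
  ProductFree S ∧ ∀ T : Set G, ProductFree T → S ⊆ T → S = T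

/-- `S` fills `G` (is complete) if every non-identity element lies in `S ∪ SS`. -/
def Fills {G : Type*} [Group G] (S : Set G) : Prop :=
  ∀ g : G, g ≠ 1 → g ∈ S ∪ S * S

/-- `G` is filled if every locally maximal product-free set fills `G`. -/
def Filled (G : Type*) [Group G] : Prop :=
  ∀ S : Set G, LocallyMaximalPF S → Fills S

/-!
Local maximality of a nonempty product-free set `S` is equivalent to
`G = S ∪ SS ∪ SS⁻¹ ∪ S⁻¹S ∪ √S`. This cover pulls back along a surjective homomorphism, so the
preimage of a locally maximal product-free set is again one and filledness passes to quotients;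
in an elementary abelian 2-group `S⁻¹ = S` and `√S = ∅`, so the cover is `S ∪ SS`.

Conversely write `G ≅ ∏ ℤ/nᵢ`; every `ℤ/nᵢ` and every `ℤ/nᵢ × ℤ/nⱼ` is a quotient. In `ℤ/n` with
`n ≥ 6` the interval `[a, 2a)`, `a = ⌊(n + 6)/5⌋`, is locally maximal sum-free but misses `a - 1`,
and small explicit sets rule out `ℤ/4` and `ℤ/m × ℤ/k` for `m ∈ {3, 5}`, `k ∈ {2, 3, 5}`. Hence
either all `nᵢ = 2`, or `G` is `ℤ/3` or `ℤ/5`, which are filled by exhaustive search.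
-/

section Basic

variable {G : Type*} [Group G] {S : Set G}

theorem productFree_iff : ProductFree S ↔ ∀ a ∈ S, ∀ b ∈ S, a * b ∉ S := by
  simp only [ProductFree, Set.disjoint_left, Set.mem_mul]
  grind

theorem ProductFree.one_notMem (hS : ProductFree S) : (1 : G) ∉ S :=
  fun h => productFree_iff.1 hS 1 h 1 h (by rwa [one_mul])

theorem productFree_singleton {g : G} (hg : g ≠ 1) : ProductFree ({g} : Set G) := by
  simpa [productFree_iff] using hg

theorem ProductFree.preimage {H : Type*} [Group H] {T : Set H} (hT : ProductFree T) (φ : G →* H) :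
    ProductFree (φ ⁻¹' T) := by
  rw [productFree_iff] at hT ⊢
  intro a ha b hb hab
  exact hT _ ha _ hb (by simpa using hab)

theorem locallyMaximalPF_iff_insert :
    LocallyMaximalPF S ↔ ProductFree S ∧ ∀ g ∉ S, ¬ ProductFree (insert g S) := by
  refine and_congr_right fun _ => ⟨fun h g hg hPF => hg ?_, fun h T hT hST => ?_⟩
  · rw [h _ hPF (Set.subset_insert g S)]
    exact Set.mem_insert g S
  · by_contra hne
    obtain ⟨g, hgT, hgS⟩ := Set.not_subset.1 fun hTS => hne (hST.antisymm hTS)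
    exact h g hgS (Disjoint.mono (Set.insert_subset hgT hST)
      (Set.mul_subset_mul (Set.insert_subset hgT hST) (Set.insert_subset hgT hST)) hT)

theorem LocallyMaximalPF.nonempty [Nontrivial G] (hS : LocallyMaximalPF S) : S.Nonempty := by
  obtain ⟨g, hg⟩ := exists_ne (1 : G)
  rw [Set.nonempty_iff_ne_empty]
  rintro rfl
  exact Set.singleton_ne_empty g (hS.2 _ (productFree_singleton hg) (Set.empty_subset _)).symm

theorem locallyMaximalPF_iff_cover (hS : S.Nonempty) :
    LocallyMaximalPF S ↔
      ProductFree S ∧ S ∪ S * S ∪ S * S⁻¹ ∪ S⁻¹ * S ∪ {x | x * x ∈ S} = Set.univ := by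
  rw [locallyMaximalPF_iff_insert]
  refine and_congr_right fun hPF => ⟨fun h => ?_, fun h g hg hPF' => ?_⟩
  · refine Set.eq_univ_of_forall fun g => ?_
    by_cases hgS : g ∈ S
    · simp [hgS]
    have h1 := hPF.one_notMem
    have := h g hgS
    simp only [productFree_iff, Set.mem_insert_iff, not_forall, not_not] at this
    obtain ⟨x, hx, y, hy, hxy⟩ := this
    simp only [Set.mem_union, Set.mem_mul, Set.mem_inv, Set.mem_ofPred_eq]
    rcases hx with rfl | hx <;> rcases hy with rfl | hy
    · rcases hxy with hxy | hxy
      · obtain ⟨s, hs⟩ := hS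
        exact .inl <| .inl <| .inr ⟨s, hs, s⁻¹, by simpa, by simp [mul_eq_left.1 hxy]⟩
      · exact .inr hxy
    · rcases hxy with hxy | hxy
      · exact absurd (mul_eq_left.1 hxy ▸ hy) h1
      · exact .inl <| .inl <| .inr ⟨_, hxy, y⁻¹, by simpa, by simp⟩
    · rcases hxy with hxy | hxy
      · exact absurd (mul_eq_right.1 hxy ▸ hx) h1
      · exact .inl <| .inr ⟨x⁻¹, by simpa, _, hxy, by simp⟩
    · rcases hxy with hxy | hxy
      · exact .inl <| .inl <| .inl <| .inr ⟨x, hx, y, hy, hxy⟩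
      · exact absurd hxy (productFree_iff.1 hPF x hx y hy)
  · have hg' : g ∈ S ∪ S * S ∪ S * S⁻¹ ∪ S⁻¹ * S ∪ {x | x * x ∈ S} := h ▸ Set.mem_univ g
    simp only [Set.mem_union, Set.mem_mul, Set.mem_inv, Set.mem_ofPred_eq] at hg'
    have ins := Set.mem_insert g S
    rw [productFree_iff] at hPF'
    rcases hg' with (((hgS | ⟨s, hs, t, ht, rfl⟩) | ⟨s, hs, t, ht, rfl⟩) | ⟨s, hs, t, ht, rfl⟩) | hgg
    · exact hg hgS
    · exact hPF' s (.inr hs) t (.inr ht) ins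
    · exact hPF' _ ins t⁻¹ (.inr ht) (by simpa using Or.inr hs)
    · exact hPF' s⁻¹ (.inr hs) _ ins (by simpa using Or.inr ht)
    · exact hPF' g ins g ins (.inr hgg)

end Basic

section Filled

variable {G H : Type*} [Group G] [Group H]

theorem MonoidHom.preimage_mul_of_surjective (φ : G →* H) (hφ : Function.Surjective φ)
    (A B : Set H) : φ ⁻¹' (A * B) = φ ⁻¹' A * φ ⁻¹' B := by
  refine subset_antisymm (fun g hg => ?_) (Set.preimage_mul_preimage_subset φ)
  obtain ⟨a, ha, b, hb, hab⟩ := hg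
  obtain ⟨x, rfl⟩ := hφ a
  exact ⟨x, ha, x⁻¹ * g, by simpa [← hab] using hb, mul_inv_cancel_left x g⟩

theorem Filled.of_surjective (hG : Filled G) (φ : G →* H) (hφ : Function.Surjective φ) :
    Filled H := by
  intro T hT h hh
  have : Nontrivial H := ⟨⟨h, 1, hh⟩⟩
  obtain ⟨g, rfl⟩ := hφ h
  have hS : LocallyMaximalPF (φ ⁻¹' T) := by
    have hT' := (locallyMaximalPF_iff_cover hT.nonempty).1 hT
    refine (locallyMaximalPF_iff_cover (hT.nonempty.preimage hφ)).2 ⟨hT'.1.preimage φ, ?_⟩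
    have hinv : φ ⁻¹' T⁻¹ = (φ ⁻¹' T)⁻¹ := by ext; simp
    have := congrArg (φ ⁻¹' ·) hT'.2
    simpa [Set.preimage_union, φ.preimage_mul_of_surjective hφ, hinv] using this
  have := Set.mem_image_of_mem φ (hG _ hS g fun hg => hh (by rw [hg, map_one]))
  rwa [Set.image_union, Set.image_mul, Set.image_preimage_eq T hφ] at this

theorem filled_of_forall_sq_eq_one (h : ∀ g : G, g ^ 2 = 1) : Filled G := by
  intro S hS g hg
  have : Nontrivial G := ⟨⟨g, 1, hg⟩⟩
  have hinv : S⁻¹ = S := by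
    ext x
    rw [Set.mem_inv, inv_eq_of_mul_eq_one_left (by rw [← sq, h])]
  have hcover := ((locallyMaximalPF_iff_cover hS.nonempty).1 hS).2 ▸ Set.mem_univ g
  simpa [hinv, ← sq, h, hS.1.one_notMem] using hcover

end Filled

section Finset

variable {G : Type*} [Group G]

theorem productFree_coe_iff (W : Finset G) :
    ProductFree (W : Set G) ↔ ∀ a ∈ W, ∀ b ∈ W, a * b ∉ W := by
  simp [productFree_iff]

theorem locallyMaximalPF_coe_iff [DecidableEq G] (W : Finset G) :
    LocallyMaximalPF (W : Set G) ↔ (∀ a ∈ W, ∀ b ∈ W, a * b ∉ W) ∧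
      ∀ g ∉ W, ∃ a ∈ insert g W, ∃ b ∈ insert g W, a * b ∈ insert g W := by
  rw [locallyMaximalPF_iff_insert, productFree_coe_iff]
  refine and_congr_right fun _ => forall₂_congr fun g _ => ?_
  rw [← Finset.coe_insert, productFree_coe_iff]
  push Not
  rfl

theorem fills_coe_iff (W : Finset G) :
    Fills (W : Set G) ↔ ∀ g ≠ (1 : G), g ∈ W ∨ ∃ a ∈ W, ∃ b ∈ W, a * b = g := by
  simp [Fills, Set.mem_mul]

theorem filled_iff_forall_finset [Finite G] :
    Filled G ↔ ∀ W : Finset G, LocallyMaximalPF (W : Set G) → Fills (W : Set G) :=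
  ⟨fun h W => h W, fun h S => by simpa using h (Set.toFinite S).toFinset⟩

theorem not_filled_of_finset [DecidableEq G] (W : Finset G)
    (hW : (∀ a ∈ W, ∀ b ∈ W, a * b ∉ W) ∧
      ∀ g ∉ W, ∃ a ∈ insert g W, ∃ b ∈ insert g W, a * b ∈ insert g W)
    (hfill : ¬ ∀ g ≠ (1 : G), g ∈ W ∨ ∃ a ∈ W, ∃ b ∈ W, a * b = g) : ¬ Filled G :=
  fun h => hfill ((fills_coe_iff W).1 (h W ((locallyMaximalPF_coe_iff W).2 hW)))

end Finset

section Interval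

open Multiplicative

variable {n : ℕ}

theorem exists_val_toAdd_eq {k : ℕ} (hk : k < n) :
    ∃ x : Multiplicative (ZMod n), (toAdd x).val = k :=
  ⟨ofAdd k, ZMod.val_cast_of_lt hk⟩

variable [NeZero n]

theorem val_toAdd_mul (x y : Multiplicative (ZMod n)) :
    (toAdd (x * y)).val = (toAdd x).val + (toAdd y).val ∨
      (toAdd (x * y)).val + n = (toAdd x).val + (toAdd y).val := by
  rw [toAdd_mul]
  rcases lt_or_ge ((toAdd x).val + (toAdd y).val) n with h | h
  · exact .inl (ZMod.val_add_of_lt h)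
  · exact .inr (ZMod.val_add_val_of_le h).symm

theorem mul_eq_of_val_add_eq {x y z : Multiplicative (ZMod n)}
    (h : (toAdd x).val + (toAdd y).val = (toAdd z).val ∨
      (toAdd x).val + (toAdd y).val = (toAdd z).val + n) : x * y = z := by
  refine toAdd.injective (ZMod.val_injective n ?_)
  have := ZMod.val_lt (toAdd z)
  have := ZMod.val_lt (toAdd (x * y))
  rcases val_toAdd_mul x y with h' | h' <;> omega

variable (n) in
def zmodInterval (a : ℕ) : Set (Multiplicative (ZMod n)) :=
  {x | a ≤ (toAdd x).val ∧ (toAdd x).val < 2 * a}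

variable {a : ℕ}

theorem productFree_zmodInterval (h : 3 * a ≤ n) : ProductFree (zmodInterval n a) := by
  rw [productFree_iff]
  rintro x ⟨hx, hx'⟩ y ⟨hy, hy'⟩ ⟨hxy, hxy'⟩
  rcases val_toAdd_mul x y with h' | h' <;> omega

theorem locallyMaximalPF_zmodInterval (h : 3 * a ≤ n) (h' : n + 2 ≤ 5 * a) :
    LocallyMaximalPF (zmodInterval n a) := by
  refine locallyMaximalPF_iff_insert.2 ⟨productFree_zmodInterval h, fun g hg hPF => ?_⟩
  rw [productFree_iff] at hPF
  have mem (k : ℕ) (hk : a ≤ k) (hk' : k < 2 * a) : ∃ x ∈ zmodInterval n a, (toAdd x).val = k := by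
    obtain ⟨x, hx⟩ := exists_val_toAdd_eq (show k < n by omega)
    exact ⟨x, by simp [zmodInterval, hx, hk, hk'], hx⟩
  simp only [zmodInterval, Set.mem_ofPred_eq, not_and, not_lt] at hg
  have hgn := ZMod.val_lt (toAdd g)
  generalize hv : (toAdd g).val = v at hg hgn
  -- `v < a` is hit as `g * a`, `v ∈ [2a, 4a - 2]` as a sum of two elements, and
  -- `v ≥ 4a - 1 > n - a` wraps around: `g * (n + a - v) = a`.
  rcases lt_or_ge v a with hva | hva
  · obtain ⟨s, hs, hsv⟩ := mem a le_rfl (by omega)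
    obtain ⟨t, ht, htv⟩ := mem (v + a) (by omega) (by omega)
    have hgs : g * s = t := mul_eq_of_val_add_eq (by omega)
    exact hPF g (.inl rfl) s (.inr hs) (hgs ▸ .inr ht)
  rcases le_or_gt v (4 * a - 2) with hv4 | hv4
  · obtain ⟨s, hs, hsv⟩ := mem (min (2 * a - 1) (v - a)) (by omega) (by omega)
    obtain ⟨t, ht, htv⟩ := mem (v - min (2 * a - 1) (v - a)) (by omega) (by omega)
    have hst : s * t = g := mul_eq_of_val_add_eq (by omega)
    exact hPF s (.inr hs) t (.inr ht) (hst ▸ .inl rfl)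
  · obtain ⟨s, hs, hsv⟩ := mem a le_rfl (by omega)
    obtain ⟨t, ht, htv⟩ := mem (n + a - v) (by omega) (by omega)
    have hgt : g * t = s := mul_eq_of_val_add_eq (by omega)
    exact hPF g (.inl rfl) t (.inr ht) (hgt ▸ .inr hs)

theorem not_fills_zmodInterval (h : 3 * a ≤ n) (ha : 2 ≤ a) : ¬ Fills (zmodInterval n a) := by
  obtain ⟨g, hg⟩ := exists_val_toAdd_eq (n := n) (k := a - 1) (by omega)
  intro hfill
  rcases hfill g (by rintro rfl; simp only [toAdd_one, ZMod.val_zero] at hg; omega) with ⟨hg', -⟩ | hg'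
  · omega
  · obtain ⟨x, ⟨hx, hx'⟩, y, ⟨hy, hy'⟩, rfl⟩ := Set.mem_mul.1 hg'
    rcases val_toAdd_mul x y with h' | h' <;> omega

theorem not_filled_zmod_of_six_le {n : ℕ} (hn : 6 ≤ n) : ¬ Filled (Multiplicative (ZMod n)) := by
  have : NeZero n := ⟨by omega⟩
  intro hF
  exact not_fills_zmodInterval (a := (n + 6) / 5) (by omega) (by omega)
    (hF _ (locallyMaximalPF_zmodInterval (by omega) (by omega)))

end Interval

section Small

open Multiplicative

set_option synthInstance.maxSize 256 in
theorem filled_zmod_three : Filled (Multiplicative (ZMod 3)) := by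
  simp only [filled_iff_forall_finset, locallyMaximalPF_coe_iff, fills_coe_iff]
  decide

set_option synthInstance.maxSize 256 in
theorem filled_zmod_five : Filled (Multiplicative (ZMod 5)) := by
  simp only [filled_iff_forall_finset, locallyMaximalPF_coe_iff, fills_coe_iff]
  decide

theorem not_filled_zmod_four : ¬ Filled (Multiplicative (ZMod 4)) :=
  not_filled_of_finset {ofAdd 2} (by decide) (by decide)

theorem eq_two_or_three_or_five_of_filled_zmod {n : ℕ} (hn : 1 < n)
    (hF : Filled (Multiplicative (ZMod n))) : n = 2 ∨ n = 3 ∨ n = 5 := by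
  by_contra h
  obtain rfl | h6 : n = 4 ∨ 6 ≤ n := by omega
  · exact not_filled_zmod_four hF
  · exact not_filled_zmod_of_six_le h6 hF

set_option synthInstance.maxSize 256 in
theorem not_filled_zmod_prod_zmod {m n : ℕ} (hm : m = 3 ∨ m = 5) (hn : n = 2 ∨ n = 3 ∨ n = 5) :
    ¬ Filled (Multiplicative (ZMod m) × Multiplicative (ZMod n)) := by
  rcases hm with rfl | rfl <;> rcases hn with rfl | rfl | rfl
  · exact not_filled_of_finset {(ofAdd 1, ofAdd 0), (ofAdd 0, ofAdd 1)}
      (by decide) (by decide)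
  · exact not_filled_of_finset {(ofAdd 0, ofAdd 1), (ofAdd 1, ofAdd 0), (ofAdd 2, ofAdd 2)}
      (by decide) (by decide)
  · exact not_filled_of_finset {(ofAdd 0, ofAdd 1), (ofAdd 1, ofAdd 2), (ofAdd 2, ofAdd 2)}
      (by decide) (by decide)
  · exact not_filled_of_finset {(ofAdd 1, ofAdd 0), (ofAdd 4, ofAdd 0), (ofAdd 0, ofAdd 1)}
      (by decide) (by decide)
  · exact not_filled_of_finset {(ofAdd 1, ofAdd 0), (ofAdd 2, ofAdd 1), (ofAdd 2, ofAdd 2)}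
      (by decide) (by decide)
  · exact not_filled_of_finset {(ofAdd 0, ofAdd 1), (ofAdd 0, ofAdd 4), (ofAdd 1, ofAdd 0),
      (ofAdd 1, ofAdd 2), (ofAdd 3, ofAdd 3)}
      (by decide) (by decide)

end Small

theorem surjective_eval_prod_eval {ι : Type*} [DecidableEq ι] {M : ι → Type*} [∀ i, One (M i)]
    {i j : ι} (hij : i ≠ j) : Function.Surjective fun f : (∀ k, M k) => (f i, f j) :=
  fun p => ⟨Function.update (Function.update 1 i p.1) j p.2, by
    simp [Function.update_of_ne hij]⟩

theorem Filled.pi_zmod_cases {ι : Type*} {n : ι → ℕ} (hn : ∀ i, 1 < n i)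
    (hF : Filled (∀ i, Multiplicative (ZMod (n i)))) :
    (∀ i, n i = 2) ∨ ∃ i, (n i = 3 ∨ n i = 5) ∧ ∀ j, j = i := by
  classical
  have h235 (i : ι) : n i = 2 ∨ n i = 3 ∨ n i = 5 :=
    eq_two_or_three_or_five_of_filled_zmod (hn i)
      (hF.of_surjective (Pi.evalMonoidHom _ i) (Function.surjective_eval i))
  have hpair {i j : ι} (hij : i ≠ j) (hi : n i = 3 ∨ n i = 5) : False :=
    not_filled_zmod_prod_zmod hi (h235 j) <| hF.of_surjective
      ((Pi.evalMonoidHom _ i).prod (Pi.evalMonoidHom _ j)) (surjective_eval_prod_eval hij)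
  by_cases h2 : ∀ i, n i = 2
  · exact .inl h2
  · push Not at h2
    obtain ⟨i, hi⟩ := h2
    have hi' : n i = 3 ∨ n i = 5 := by have := h235 i; omega
    exact .inr ⟨i, hi', fun j => by_contra fun hji => hpair (Ne.symm hji) hi'⟩

theorem Nat.card_multiplicative_zmod (n : ℕ) : Nat.card (Multiplicative (ZMod n)) = n :=
  (Nat.card_congr Multiplicative.toAdd).trans (Nat.card_zmod n)

theorem IsCyclic.filled_of_card_eq {G : Type*} [Group G] (hc : IsCyclic G) {n : ℕ}
    (hn : Nat.card G = n) (hF : Filled (Multiplicative (ZMod n))) : Filled G := by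
  subst hn
  exact hF.of_surjective _ (zmodCyclicMulEquiv hc).surjective

theorem abelian_filled_iff {G : Type*} [CommGroup G] [Finite G] :
    Filled G ↔
      (IsCyclic G ∧ Nat.card G = 3) ∨ (IsCyclic G ∧ Nat.card G = 5) ∨
        (∀ g : G, g ^ 2 = 1) := by
  constructor
  · intro hF
    obtain ⟨ι, _, n, hn, ⟨e⟩⟩ := CommGroup.equiv_prod_multiplicative_zmod_of_finite G
    rcases (hF.of_surjective e.toMonoidHom e.surjective).pi_zmod_cases hn with h2 | ⟨i, hi, hι⟩
    · refine .inr (.inr fun g => e.injective (funext fun j => ?_))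
      have hcard : Nat.card (Multiplicative (ZMod (n j))) = 2 :=
        (Nat.card_multiplicative_zmod _).trans (h2 j)
      rw [map_pow, map_one, Pi.pow_apply, Pi.one_apply, ← hcard, pow_card_eq_one']
    · let : Unique ι := ⟨⟨i⟩, hι⟩
      have hcard : Nat.card G = n i :=
        (Nat.card_congr (e.trans (MulEquiv.piUnique _)).toEquiv).trans
          (Nat.card_multiplicative_zmod (n i))
      rcases hi with h3 | h5
      · have : Fact (Nat.Prime 3) := ⟨Nat.prime_three⟩
        exact .inl ⟨isCyclic_of_prime_card (hcard.trans h3), hcard.trans h3⟩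
      · have : Fact (Nat.Prime 5) := ⟨Nat.prime_five⟩
        exact .inr (.inl ⟨isCyclic_of_prime_card (hcard.trans h5), hcard.trans h5⟩)
  · rintro (⟨hc, h3⟩ | ⟨hc, h5⟩ | h2)
    · exact hc.filled_of_card_eq h3 filled_zmod_three
    · exact hc.filled_of_card_eq h5 filled_zmod_five
    · exact filled_of_forall_sq_eq_one h2
end

section
/- Let S be a locally maximal product-free set in a finite group G. If a ∈ S but a⁻¹ ∉ S, then a⁻¹ ∈ SS ∪ √S, where √S = {x ∈ G : x² ∈ S}. -/
open Pointwise

/-!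
By maximality `insert a⁻¹ S` is not product-free, and solving the offending relation `x * y = z`
for `a⁻¹` puts `a⁻¹` in `√S`, `SS`, `SS⁻¹`, `S⁻¹S` or `{1}`. The last three are impossible:
`1 ∉ S`, and `a⁻¹ = x * y⁻¹` or `a⁻¹ = y⁻¹ * x` with `x, y ∈ S` would give `y = a * x` or
`y = x * a`, an element of `S ∩ SS`.
-/

section

variable {G : Type*} [Group G] {S : Set G}

theorem ProductFree.mul_notMem (hS : ProductFree S) {x y : G} (hx : x ∈ S) (hy : y ∈ S) :
    x * y ∉ S := fun h => Set.disjoint_left.mp hS h (Set.mul_mem_mul hx hy)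

theorem ProductFree.of_not_productFree_insert (hS : ProductFree S) {g : G}
    (h : ¬ ProductFree (insert g S)) :
    g ^ 2 ∈ S ∨ g ∈ S * S ∨ g ∈ S * S⁻¹ ∨ g ∈ S⁻¹ * S ∨ g = 1 := by
  obtain ⟨z, hz, hzSS⟩ := Set.not_disjoint_iff.mp h
  obtain ⟨x, hx, y, hy, rfl⟩ := Set.mem_mul.mp hzSS
  rcases hx with rfl | hx <;> rcases hy with rfl | hy <;> rcases hz with hz | hz
  · exact .inr <| .inr <| .inr <| .inr <| mul_eq_left.mp hz
  · exact .inl (by rwa [pow_two])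
  · exact absurd (mul_eq_left.mp hz ▸ hy) hS.one_notMem
  · exact .inr <| .inr <| .inl
      ⟨x * y, hz, y⁻¹, Set.inv_mem_inv.mpr hy, mul_inv_cancel_right x y⟩
  · exact absurd (mul_eq_right.mp hz ▸ hx) hS.one_notMem
  · exact .inr <| .inr <| .inr <| .inl
      ⟨x⁻¹, Set.inv_mem_inv.mpr hx, x * y, hz, inv_mul_cancel_left x y⟩
  · exact .inr <| .inl (hz ▸ Set.mul_mem_mul hx hy)
  · exact absurd hz (hS.mul_notMem hx hy)

theorem LocallyMaximalPF.not_productFree_insert (hS : LocallyMaximalPF S) {g : G}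
    (hg : g ∉ S) : ¬ ProductFree (insert g S) := fun h =>
  hg ((hS.2 _ h (Set.subset_insert g S)).symm ▸ Set.mem_insert g S)

theorem ProductFree.inv_notMem_mul_inv (hS : ProductFree S) {a : G} (ha : a ∈ S) :
    a⁻¹ ∉ S * S⁻¹ := by
  rintro ⟨x, hx, y, hy, hxy : x * y = a⁻¹⟩
  have hax : a * x = y⁻¹ := by rw [eq_inv_iff_mul_eq_one, mul_assoc, hxy, mul_inv_cancel]
  exact hS.mul_notMem ha hx (hax ▸ hy)

theorem ProductFree.inv_notMem_inv_mul (hS : ProductFree S) {a : G} (ha : a ∈ S) :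
    a⁻¹ ∉ S⁻¹ * S := by
  rintro ⟨x, hx, y, hy, hxy : x * y = a⁻¹⟩
  have hya : y * a = x⁻¹ := by
    rw [eq_comm, inv_eq_iff_mul_eq_one, ← mul_assoc, hxy, inv_mul_cancel]
  exact hS.mul_notMem hy ha (hya ▸ hx)

end

theorem inv_mem_SS_or_sqrt_general {G : Type*} [Group G] (S : Set G)
    (hS : LocallyMaximalPF S) (a : G) (ha : a ∈ S) (ha' : a⁻¹ ∉ S) :
    a⁻¹ ∈ S * S ∪ {x : G | x ^ 2 ∈ S} := by
  have hpf : ProductFree S := hS.1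
  rcases hpf.of_not_productFree_insert (hS.not_productFree_insert ha') with
    hsq | hSS | hSSinv | hSinvS | hone
  · exact .inr hsq
  · exact .inl hSS
  · exact absurd hSSinv (hpf.inv_notMem_mul_inv ha)
  · exact absurd hSinvS (hpf.inv_notMem_inv_mul ha)
  · exact absurd (inv_eq_one.mp hone ▸ ha) hpf.one_notMem

theorem inv_mem_SS_or_sqrt {G : Type*} [Group G] [Finite G] (S : Set G)
    (hS : LocallyMaximalPF S) (a : G) (ha : a ∈ S) (ha' : a⁻¹ ∉ S) :
    a⁻¹ ∈ S * S ∪ {x : G | x ^ 2 ∈ S} :=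
  inv_mem_SS_or_sqrt_general S hS a ha ha'
end
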